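/- arXiv:1304.7497 — 2 statements merged into one kernel-verified Lean document; each statement's English description precedes it below -/
import Mathlib

section
/- Let V be a Hilbert space, F ∈ V' a continuous antilinear functional, U a Hilbert space, B : U → V' a bounded linear operator, and T : U → V the operator with ⟨Tw, v⟩_V = (Bw)(v) for all v ∈ V. For a finite-dimensional subspace U_h ⊆ U with V_h = T U_h, an element u_h ∈ U_h satisfies (B u_h)(v) = F(v) for all v ∈ V_h if and only if u_h minimizes ‖B w_h − F‖_{V'} over all w_h ∈ U_h. -/
/-!
By the antilinear Riesz theorem, `x ↦ ⟪·, x⟫` is an isometric bijection `V → V'`. It sends `T w`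
to `B w`; if it sends `f` to `F`, the residual `B w - F` has dual norm `‖T w - f‖`. So minimizing
the residual over `U_h` is best approximation of `f` from the subspace `T U_h`, which holds exactly
when `f - T u_h ⟂ T U_h`, and this orthogonality is the discrete variational equation on `V_h`.
-/

open scoped InnerProductSpace

section InnerProduct

variable {𝕜 U V : Type*} [RCLike 𝕜] [NormedAddCommGroup V] [InnerProductSpace 𝕜 V]

theorem innerSLFlip_eq_starₗᵢ_comp_innerSL (x : V) :
    innerSLFlip 𝕜 x =
      (starₗᵢ 𝕜 : 𝕜 ≃ₗᵢ⋆[𝕜] 𝕜).toLinearIsometry.toContinuousLinearMap.comp (innerSL 𝕜 x) := by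
  ext v
  simp

theorem norm_innerSLFlip_apply (x : V) : ‖innerSLFlip 𝕜 x‖ = ‖x‖ := by
  rw [innerSLFlip_eq_starₗᵢ_comp_innerSL, LinearIsometry.norm_toContinuousLinearMap_comp,
    innerSL_apply_norm]

/-- Riesz representation of continuous antilinear functionals. -/
theorem innerSLFlip_surjective [CompleteSpace V] :
    Function.Surjective (innerSLFlip 𝕜 : V → V →L⋆[𝕜] 𝕜) := by
  intro G
  refine ⟨(InnerProductSpace.toDual 𝕜 V).symm
    ((starₗᵢ 𝕜 : 𝕜 ≃ₗᵢ⋆[𝕜] 𝕜).toLinearIsometry.toContinuousLinearMap.comp G), ?_⟩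
  ext v
  rw [innerSLFlip_apply_apply, ← inner_conj_symm, InnerProductSpace.toDual_symm_apply]
  simp

theorem Submodule.forall_norm_sub_le_iff_inner_eq_zero (K : Submodule 𝕜 V) {u v : V}
    (hv : v ∈ K) : (∀ w ∈ K, ‖u - v‖ ≤ ‖u - w‖) ↔ ∀ w ∈ K, ⟪u - v, w⟫_𝕜 = 0 := by
  have hbdd : BddBelow (Set.range fun w : K => ‖u - w‖) :=
    ⟨0, Set.forall_mem_range.2 fun _ => norm_nonneg _⟩
  rw [← K.norm_eq_iInf_iff_inner_eq_zero hv]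
  constructor
  · intro h
    exact le_antisymm (le_ciInf fun w => h w w.2) (ciInf_le hbdd ⟨v, hv⟩)
  · intro h w hw
    exact h ▸ ciInf_le hbdd ⟨w, hw⟩

variable [AddCommGroup U] [Module 𝕜 U]

def linearMapOfInnerEq (B : U →ₗ[𝕜] V →L⋆[𝕜] 𝕜) (T : U → V)
    (hT : ∀ w v, ⟪v, T w⟫_𝕜 = B w v) : U →ₗ[𝕜] V where
  toFun := T
  map_add' a b := ext_inner_left 𝕜 fun v => by simp [hT, inner_add_right]
  map_smul' c a := ext_inner_left 𝕜 fun v => by simp [hT, inner_smul_right]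

end InnerProduct

theorem stmt_6_general {U V : Type*} [NormedAddCommGroup U] [InnerProductSpace ℂ U]
    [NormedAddCommGroup V] [InnerProductSpace ℂ V] [CompleteSpace V]
    (F : V →L⋆[ℂ] ℂ) (B : U →L[ℂ] (V →L⋆[ℂ] ℂ))
    (T : U → V) (hT : ∀ (w : U) (v : V), ⟪v, T w⟫_ℂ = B w v)
    (Uh : Submodule ℂ U)
    (uh : U) (huh : uh ∈ Uh) :
    (∀ wh ∈ Uh, B uh (T wh) = F (T wh)) ↔
      (∀ wh ∈ Uh, ‖B uh - F‖ ≤ ‖B wh - F‖) := by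
  obtain ⟨f, rfl⟩ := innerSLFlip_surjective (𝕜 := ℂ) F
  let Tl := linearMapOfInnerEq (B : U →ₗ[ℂ] V →L⋆[ℂ] ℂ) T hT
  have hresidual (w : U) : ‖B w - innerSLFlip ℂ f‖ = ‖f - T w‖ := by
    have : B w - innerSLFlip ℂ f = innerSLFlip ℂ (T w - f) := by
      ext v
      simp [← hT]
    rw [this, norm_innerSLFlip_apply, norm_sub_rev]
  have hgalerkin (wh : U) : B uh (T wh) = innerSLFlip ℂ f (T wh) ↔ ⟪f - T uh, T wh⟫_ℂ = 0 := by
    rw [← hT, innerSLFlip_apply_apply, inner_eq_zero_symm, inner_sub_right, sub_eq_zero, eq_comm]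
  simp only [hresidual, hgalerkin]
  have hmin := (Uh.map Tl).forall_norm_sub_le_iff_inner_eq_zero (u := f)
    (Submodule.mem_map_of_mem huh)
  simp only [Submodule.mem_map, forall_exists_index, and_imp, forall_apply_eq_imp_iff₂] at hmin
  exact hmin.symm

/-- The DPG method with optimal test functions is equivalent to residual
minimization in the dual norm: `u_h` solves the discrete variational problem on
`V_h = T(U_h)` iff it minimizes `‖B w_h − F‖_{V'}` over `U_h`. -/
theorem stmt_6 {U V : Type*} [NormedAddCommGroup U] [InnerProductSpace ℂ U]
    [NormedAddCommGroup V] [InnerProductSpace ℂ V] [CompleteSpace V]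
    (F : V →L⋆[ℂ] ℂ) (B : U →L[ℂ] (V →L⋆[ℂ] ℂ))
    (T : U → V) (hT : ∀ (w : U) (v : V), ⟪v, T w⟫_ℂ = B w v)
    (Uh : Submodule ℂ U) (hfin : FiniteDimensional ℂ Uh)
    (uh : U) (huh : uh ∈ Uh) :
    (∀ wh ∈ Uh, B uh (T wh) = F (T wh)) ↔
      (∀ wh ∈ Uh, ‖B uh - F‖ ≤ ‖B wh - F‖) :=
  stmt_6_general F B T hT Uh uh huh
end

section
/- Under the hypotheses of the ε-DPG continuity estimate, for all (w, q̂) ∈ U and v ∈ V, |b((w,q̂), v)| ≤ sqrt(‖w‖² + ‖q̂‖_Q²) · sqrt(1 + c ε) · ‖v‖_V, where ‖v‖_V² = ‖A_h v‖² + ε²‖v‖² and c = C(ω)(C(ω)ε/2 + sqrt(1 + C(ω)²ε²/4)). -/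
open scoped InnerProductSpace

lemma key_ineq (a b x y C ε : ℝ) (ha : 0 ≤ a) (hb : 0 ≤ b) (hx : 0 ≤ x)
    (hy : 0 ≤ y) (hC : 0 < C) (hε : 0 < ε) :
    a * x + C * ε * b * x + b * y ≤
      Real.sqrt (a ^ 2 + b ^ 2) *
        (Real.sqrt (1 + C * (C * ε / 2 + Real.sqrt (1 + C ^ 2 * ε ^ 2 / 4)) * ε) *
          Real.sqrt (x ^ 2 + y ^ 2)) := by
  set s := Real.sqrt (1 + C ^ 2 * ε ^ 2 / 4) with hsdef
  have hs0 : 0 ≤ 1 + C ^ 2 * ε ^ 2 / 4 := by positivity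
  have hs2 : s ^ 2 = 1 + C ^ 2 * ε ^ 2 / 4 := Real.sq_sqrt hs0
  have hsnn : 0 ≤ s := Real.sqrt_nonneg _
  have hs1 : 1 ≤ s := by nlinarith [mul_pos hC hε]
  have ht : 0 < s - C * ε / 2 := by nlinarith [mul_pos hC hε]
  have hc0 : 0 ≤ 1 + C * (C * ε / 2 + s) * ε := by nlinarith [mul_pos hC hε]
  have h1 : (s - C * ε / 2) * ((s - C * ε / 2) * x ^ 2 - 2 * x * y + (s + C * ε / 2) * y ^ 2)
      = ((s - C * ε / 2) * x - y) ^ 2 + (s ^ 2 - (1 + C ^ 2 * ε ^ 2 / 4)) * y ^ 2 := by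
    ring
  have hD : 0 ≤ (s - C * ε / 2) * x ^ 2 - 2 * x * y + (s + C * ε / 2) * y ^ 2 := by
    nlinarith [sq_nonneg ((s - C * ε / 2) * x - y), h1, hs2, ht]
  rw [← Real.sqrt_mul (by positivity), ← Real.sqrt_mul (by positivity)]
  rw [show (a*x + C*ε*b*x + b*y) = Real.sqrt ((a*x + C*ε*b*x + b*y)^2) from
    (Real.sqrt_sq (by positivity)).symm]
  apply Real.sqrt_le_sqrt
  nlinarith [sq_nonneg (a * (C*ε*x + y) - b * x),
    mul_nonneg (mul_nonneg (add_nonneg (sq_nonneg a) (sq_nonneg b)) (mul_pos hC hε).le) hD]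

/-- The ε-DPG continuity estimate: with `‖Eq̂‖ ≤ C(ω)ε‖q̂‖_Q` and
`‖AEq̂‖ = ε‖q̂‖_Q`, the ultraweak form
`b((w,q̂),v) = −⟨w, A_h v⟩ + ⟨Eq̂, A_h v⟩ + ⟨AEq̂, v⟩` satisfies
`|b((w,q̂),v)| ≤ √(‖w‖² + ‖q̂‖_Q²) · √(1+cε) · ‖v‖_V`. -/
theorem stmt_10 {H Q : Type*} [NormedAddCommGroup H] [InnerProductSpace ℂ H]
    (Qnorm : Q → ℝ) (hQ : ∀ q, 0 ≤ Qnorm q)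
    (E AE : Q → H) (Ah : H →ₗ[ℂ] H) (C ε : ℝ) (hC : 0 < C) (hε : 0 < ε)
    (hE : ∀ q, ‖E q‖ ≤ C * ε * Qnorm q) (hAE : ∀ q, ‖AE q‖ = ε * Qnorm q) :
    ∀ (w : H) (q : Q) (v : H),
      ‖-⟪w, Ah v⟫_ℂ + ⟪E q, Ah v⟫_ℂ + ⟪AE q, v⟫_ℂ‖ ≤
        Real.sqrt (‖w‖ ^ 2 + Qnorm q ^ 2) *
          (Real.sqrt (1 + C * (C * ε / 2 + Real.sqrt (1 + C ^ 2 * ε ^ 2 / 4)) * ε) *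
            Real.sqrt (‖Ah v‖ ^ 2 + ε ^ 2 * ‖v‖ ^ 2)) := by
  intro w q v
  have step1 : ‖-⟪w, Ah v⟫_ℂ + ⟪E q, Ah v⟫_ℂ + ⟪AE q, v⟫_ℂ‖ ≤
      ‖w‖ * ‖Ah v‖ + C * ε * Qnorm q * ‖Ah v‖ + Qnorm q * (ε * ‖v‖) := by
    calc ‖-⟪w, Ah v⟫_ℂ + ⟪E q, Ah v⟫_ℂ + ⟪AE q, v⟫_ℂ‖
        ≤ ‖-⟪w, Ah v⟫_ℂ + ⟪E q, Ah v⟫_ℂ‖ + ‖⟪AE q, v⟫_ℂ‖ := norm_add_le _ _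
      _ ≤ ‖-⟪w, Ah v⟫_ℂ‖ + ‖⟪E q, Ah v⟫_ℂ‖ + ‖⟪AE q, v⟫_ℂ‖ := by
          gcongr; exact norm_add_le _ _
      _ ≤ ‖w‖ * ‖Ah v‖ + ‖E q‖ * ‖Ah v‖ + ‖AE q‖ * ‖v‖ := by
          gcongr
          · rw [norm_neg]; exact norm_inner_le_norm _ _
          · exact norm_inner_le_norm _ _
          · exact norm_inner_le_norm _ _
      _ ≤ ‖w‖ * ‖Ah v‖ + C * ε * Qnorm q * ‖Ah v‖ + Qnorm q * (ε * ‖v‖) := by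
          gcongr ?_ + ?_ + ?_
          · exact le_refl _
          · exact mul_le_mul_of_nonneg_right (hE q) (norm_nonneg _)
          · rw [hAE q]; ring_nf; exact le_refl _
  refine step1.trans ?_
  have := key_ineq ‖w‖ (Qnorm q) ‖Ah v‖ (ε * ‖v‖) C ε (norm_nonneg _) (hQ q)
    (norm_nonneg _) (by positivity) hC hε
  calc ‖w‖ * ‖Ah v‖ + C * ε * Qnorm q * ‖Ah v‖ + Qnorm q * (ε * ‖v‖)
      ≤ Real.sqrt (‖w‖ ^ 2 + Qnorm q ^ 2) *
        (Real.sqrt (1 + C * (C * ε / 2 + Real.sqrt (1 + C ^ 2 * ε ^ 2 / 4)) * ε) *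
          Real.sqrt (‖Ah v‖ ^ 2 + (ε * ‖v‖) ^ 2)) := this
    _ = _ := by rw [show (ε * ‖v‖) ^ 2 = ε ^ 2 * ‖v‖ ^ 2 by ring]
end
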